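/- Let v be a binary vector of length n ≥ 1 with m(v) ≥ 1. Let a(v) be the unique integer with 1 ≤ a(v) < 2^n such that 2^n divides 3^{m(v)}·a(v) + 1, and let b(v) = (3^{m(v)}·a(v) + 1)/2^n. Set X(v) = P(v)·a(v) and Y(v) = P(v)·b(v). Then the parity vector of length n of X(v) equals v, and T^n(X(v)) = Y(v). (Paper's Theorem 4.6.) -/

import Mathlib

/-- The Collatz map `T`. -/
def collatzT (N : ℕ) : ℕ := if N % 2 = 0 then N / 2 else (3 * N + 1) / 2

/-- The parity vector of length `n` of `N`: entry `k` is `true` iff `T^[k] N` is odd. -/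
def parityVec (N n : ℕ) : List Bool :=
  (List.range n).map (fun k => decide ((collatzT^[k] N) % 2 = 1))

/-- `m(v)`: the number of ones of a binary vector. -/
def mOnes (v : List Bool) : ℕ := v.count true

/-- `P(v)`: the characteristic number of a binary vector,
`P(v) = Σ_{k=1}^{m} 3^(m-k) * 2^(j_k - 1)` where `j_1 < … < j_m` are the positions of ones. -/
def Pchar : List Bool → ℕ
  | [] => 0
  | e :: rest => (if e then 3 ^ mOnes rest else 0) + 2 * Pchar rest

/-!
One Collatz step with parity bit `e` satisfies `3^e N + e = 2 T(N)`, so peeling off the first bit of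
`v` turns `3^m(v) N + P(v)` into twice the same expression for the tail of `v` and `T(N)`.
Iterating gives Terras' identity `2^n T^n(N) = 3^m(v) N + P(v)` for `v` the parity vector of `N`,
and conversely, reading off one bit mod 2 at a time, `2^|v| ∣ 3^m(v) N + P(v)` forces the parity
vector of `N` to be `v`. For `N = P(v) a` that expression is `P(v) (3^m(v) a + 1) = 2^n P(v) b`.
-/

lemma parityVec_succ (N n : ℕ) :
    parityVec N (n + 1) = decide (N % 2 = 1) :: parityVec (collatzT N) n := by
  simp only [parityVec, List.range_succ_eq_map, List.map_cons, List.map_map]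
  rfl

lemma mOnes_cons_false (v : List Bool) : mOnes (false :: v) = mOnes v := by
  simp [mOnes]

lemma mOnes_cons_true (v : List Bool) : mOnes (true :: v) = mOnes v + 1 := by
  simp [mOnes]

lemma three_pow_mOnes_mul_add_Pchar_cons (N : ℕ) (rest : List Bool) :
    3 ^ mOnes (decide (N % 2 = 1) :: rest) * N + Pchar (decide (N % 2 = 1) :: rest)
      = 2 * (3 ^ mOnes rest * collatzT N + Pchar rest) := by
  obtain ⟨M, rfl | rfl⟩ := Nat.even_or_odd' N
  · have hT : collatzT (2 * M) = M := by simp [collatzT]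
    have hbit : decide (2 * M % 2 = 1) = false := by simp
    rw [hT, hbit, mOnes_cons_false]
    simp only [Pchar, Bool.false_eq_true, ↓reduceIte]
    ring
  · have hT : collatzT (2 * M + 1) = 3 * M + 2 := by simp [collatzT]; omega
    have hbit : decide ((2 * M + 1) % 2 = 1) = true := by simp
    rw [hT, hbit, mOnes_cons_true]
    simp only [Pchar, ↓reduceIte]
    ring

theorem two_pow_mul_iterate_collatzT (n N : ℕ) :
    2 ^ n * collatzT^[n] N = 3 ^ mOnes (parityVec N n) * N + Pchar (parityVec N n) := by
  induction n generalizing N with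
  | zero => simp [parityVec, mOnes, Pchar]
  | succ k ih =>
    rw [parityVec_succ, three_pow_mOnes_mul_add_Pchar_cons, ← ih, Function.iterate_succ_apply,
      pow_succ]
    ring

lemma decide_odd_eq_of_two_dvd {N : ℕ} {e : Bool} {rest : List Bool}
    (h : 2 ∣ 3 ^ mOnes (e :: rest) * N + Pchar (e :: rest)) : decide (N % 2 = 1) = e := by
  rw [← even_iff_two_dvd] at h
  cases e <;> simp [Pchar, mOnes, parity_simps] at h <;> simpa [Nat.even_iff, Nat.odd_iff] using h

theorem parityVec_eq_of_dvd (v : List Bool) (N : ℕ)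
    (h : 2 ^ v.length ∣ 3 ^ mOnes v * N + Pchar v) : parityVec N v.length = v := by
  induction v generalizing N with
  | nil => rfl
  | cons e rest ih =>
    have he := decide_odd_eq_of_two_dvd (dvd_trans (dvd_pow_self 2 (by simp)) h)
    subst he
    rw [List.length_cons, parityVec_succ, ih]
    rw [three_pow_mOnes_mul_add_Pchar_cons, List.length_cons, pow_succ, mul_comm] at h
    exact Nat.dvd_of_mul_dvd_mul_left two_pos h

theorem stmt_9_general (n : ℕ) (v : List Bool) (hv : v.length = n)
    (a b : ℕ)
    (hab : 3 ^ mOnes v * a + 1 = 2 ^ n * b) :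
    parityVec (Pchar v * a) n = v ∧
      collatzT^[n] (Pchar v * a) = Pchar v * b := by
  subst hv
  have hX : 3 ^ mOnes v * (Pchar v * a) + Pchar v = 2 ^ v.length * (Pchar v * b) := by
    calc _ = Pchar v * (3 ^ mOnes v * a + 1) := by ring
      _ = _ := by rw [hab]; ring
  have hpar : parityVec (Pchar v * a) v.length = v := parityVec_eq_of_dvd v _ ⟨_, hX⟩
  refine ⟨hpar, Nat.eq_of_mul_eq_mul_left (pow_pos two_pos v.length) ?_⟩
  rw [two_pow_mul_iterate_collatzT, hpar, hX]

/-- Paper's Theorem 4.6: with a(v) the unique integer in [1, 2^n) such that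
`2^n ∣ 3^(m v) * a(v) + 1` and `b(v) = (3^(m v) * a(v) + 1) / 2^n`, the point
`X(v) = P v * a v` realizes v as its parity vector of length n, and
`T^[n] (X v) = Y v = P v * b v`. -/
theorem stmt_9 (n : ℕ) (hn : 1 ≤ n) (v : List Bool) (hv : v.length = n)
    (hm : 1 ≤ mOnes v) (a b : ℕ) (ha1 : 1 ≤ a) (ha2 : a < 2 ^ n)
    (hab : 3 ^ mOnes v * a + 1 = 2 ^ n * b) :
    parityVec (Pchar v * a) n = v ∧
      collatzT^[n] (Pchar v * a) = Pchar v * b :=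
  stmt_9_general n v hv a b hab
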